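/- arXiv:math/0103050 — 5 statements merged into one kernel-verified Lean document; each statement's English description precedes it below -/
import Mathlib

section
/- Let σ : ℤ × ℤ → Bool be a spin configuration. Then every site agrees with at least three of its four nearest neighbors (i.e., for every x ∈ ℤ × ℤ, the number of nearest neighbors y of x with σ y = σ x is at least 3) if and only if there exists f : ℤ → Bool satisfying f n = f (n+1) ∨ f (n+1) = f (n+2) for all n ∈ ℤ, such that either σ (i, j) = f i for all (i, j) ∈ ℤ × ℤ, or σ (i, j) = f j for all (i, j) ∈ ℤ × ℤ. -/
/-!
A site agrees with at least three of its neighbours iff at most one of its four bonds is broken.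
If the bond between `(a, b)` and `(a, b + 1)` is broken, the horizontal bonds at both of its ends
are therefore intact, so the broken bond is copied to `a ± 1`: the wall between rows `b` and
`b + 1` is a whole line and both rows are constant. A vertical wall would likewise make two
columns constant, and the two walls would cross. Hence `σ` is constant along one axis, and the
condition becomes the one-dimensional one on the profile `f`; the swap `(i, j) ↦ (j, i)`
exchanges the two cases.
-/

/-- The four nearest-neighbor offsets in `ℤ × ℤ`. -/
def nbrOffsets : Finset (ℤ × ℤ) := {(1, 0), (-1, 0), (0, 1), (0, -1)}

lemma three_le_card_filter_nbrOffsets_iff (P : ℤ × ℤ → Prop) [DecidablePred P] :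
    3 ≤ (nbrOffsets.filter P).card ↔
      (P (1, 0) ∧ P (-1, 0) ∧ (P (0, 1) ∨ P (0, -1))) ∨
        (P (0, 1) ∧ P (0, -1) ∧ (P (1, 0) ∨ P (-1, 0))) := by
  simp only [nbrOffsets, Finset.filter_insert, Finset.filter_singleton]
  by_cases h₁ : P (1, 0) <;> by_cases h₂ : P (-1, 0) <;> by_cases h₃ : P (0, 1) <;>
    by_cases h₄ : P (0, -1) <;> simp [h₁, h₂, h₃, h₄]

def IsAbsorbing (σ : ℤ × ℤ → Bool) : Prop :=
  ∀ x : ℤ × ℤ, 3 ≤ (nbrOffsets.filter (fun d => σ (x + d) = σ x)).card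

lemma isAbsorbing_iff (σ : ℤ × ℤ → Bool) :
    IsAbsorbing σ ↔ ∀ a b : ℤ,
      (σ (a + 1, b) = σ (a, b) ∧ σ (a - 1, b) = σ (a, b) ∧
          (σ (a, b + 1) = σ (a, b) ∨ σ (a, b - 1) = σ (a, b))) ∨
        (σ (a, b + 1) = σ (a, b) ∧ σ (a, b - 1) = σ (a, b) ∧
          (σ (a + 1, b) = σ (a, b) ∨ σ (a - 1, b) = σ (a, b))) := by
  simp only [IsAbsorbing, three_le_card_filter_nbrOffsets_iff, Prod.forall, Prod.mk_add_mk,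
    add_zero, ← sub_eq_add_neg]

lemma isAbsorbing_comp_swap_iff (σ : ℤ × ℤ → Bool) :
    IsAbsorbing (σ ∘ Prod.swap) ↔ IsAbsorbing σ := by
  simp only [isAbsorbing_iff, Function.comp_apply, Prod.swap_prod_mk]
  rw [forall_comm]
  exact forall₂_congr fun _ _ => or_comm

lemma isAbsorbing_comp_fst_iff (f : ℤ → Bool) :
    IsAbsorbing (fun p => f p.1) ↔ ∀ n, f n = f (n + 1) ∨ f (n + 1) = f (n + 2) := by
  simp only [isAbsorbing_iff, true_and, and_true, or_true, forall_const]
  refine ((Equiv.addRight (1 : ℤ)).forall_congr fun {n} => ?_).symm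
  simp only [Equiv.coe_addRight, add_sub_cancel_right, add_assoc, one_add_one_eq_two]
  grind

namespace IsAbsorbing

variable {σ : ℤ × ℤ → Bool}

lemma comp_swap (h : IsAbsorbing σ) : IsAbsorbing (σ ∘ Prod.swap) :=
  (isAbsorbing_comp_swap_iff σ).2 h

lemma rows_step (h : IsAbsorbing σ) {a b : ℤ} (hab : σ (a, b + 1) ≠ σ (a, b)) :
    (σ (a + 1, b), σ (a + 1, b + 1)) = (σ (a, b), σ (a, b + 1)) ∧
      (σ (a - 1, b), σ (a - 1, b + 1)) = (σ (a, b), σ (a, b + 1)) := by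
  rw [isAbsorbing_iff] at h
  obtain ⟨e₀, w₀, -⟩ := (h a b).resolve_right fun hv => hab hv.1
  obtain ⟨e₁, w₁, -⟩ := (h a (b + 1)).resolve_right fun hv => hab (by simpa using hv.2.1.symm)
  simp only [Prod.mk.injEq]
  exact ⟨⟨e₀, e₁⟩, w₀, w₁⟩

lemma rows_eq_of_ne (h : IsAbsorbing σ) {a b : ℤ} (hab : σ (a, b + 1) ≠ σ (a, b)) (i : ℤ) :
    σ (i, b) = σ (a, b) ∧ σ (i, b + 1) = σ (a, b + 1) := by
  let rows (k : ℤ) := (σ (k, b), σ (k, b + 1))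
  have wall {k : ℤ} (hk : rows k = rows a) : σ (k, b + 1) ≠ σ (k, b) := by
    simp only [rows, Prod.mk.injEq] at hk
    rwa [hk.1, hk.2]
  suffices rows i = rows a from Prod.mk.inj this
  induction i using Int.inductionOn' (b := a) with
  | zero => rfl
  | succ k _ ih => exact (h.rows_step (wall ih)).1.trans ih
  | pred k _ ih => exact (h.rows_step (wall ih)).2.trans ih

lemma vertical_or_horizontal (h : IsAbsorbing σ) :
    (∀ a b, σ (a, b + 1) = σ (a, b)) ∨ ∀ a b, σ (a + 1, b) = σ (a, b) := by
  by_contra! ⟨⟨a, b, hab⟩, c, d, hcd⟩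
  have column := h.comp_swap.rows_eq_of_ne (a := d) (b := c) hcd
  have row := h.rows_eq_of_ne hab
  simp only [Function.comp_apply, Prod.swap_prod_mk] at column
  exact hcd <| calc
    σ (c + 1, d) = σ (c + 1, b) := ((column b).2).symm
    _ = σ (c, b) := (row (c + 1)).1.trans (row c).1.symm
    _ = σ (c, d) := (column b).1

lemma exists_eq_comp_fst (h : IsAbsorbing σ) (hv : ∀ a b, σ (a, b + 1) = σ (a, b)) :
    ∃ f : ℤ → Bool, (∀ n, f n = f (n + 1) ∨ f (n + 1) = f (n + 2)) ∧ ∀ p, σ p = f p.1 := by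
  have hσ (p : ℤ × ℤ) : σ p = σ (p.1, 0) := by
    simpa using (show Function.Periodic (fun j => σ (p.1, j)) 1 from hv p.1).int_mul_eq p.2
  refine ⟨fun i => σ (i, 0), (isAbsorbing_comp_fst_iff _).1 ?_, hσ⟩
  rwa [← funext hσ]

end IsAbsorbing

/-- A spin configuration `σ : ℤ × ℤ → Bool` has every site agreeing with at least three of
its four nearest neighbors if and only if it is a "striped" configuration coming from some
`f : ℤ → Bool` with no two sign changes at consecutive positions. -/
theorem stmt0 (σ : ℤ × ℤ → Bool) :
    (∀ x : ℤ × ℤ, 3 ≤ (nbrOffsets.filter (fun d => σ (x + d) = σ x)).card) ↔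
      ∃ f : ℤ → Bool,
        (∀ n : ℤ, f n = f (n + 1) ∨ f (n + 1) = f (n + 2)) ∧
        ((∀ p : ℤ × ℤ, σ p = f p.1) ∨ (∀ p : ℤ × ℤ, σ p = f p.2)) := by
  show IsAbsorbing σ ↔ _
  constructor
  · intro h
    rcases h.vertical_or_horizontal with hv | hh
    · obtain ⟨f, hf, hσ⟩ := h.exists_eq_comp_fst hv
      exact ⟨f, hf, Or.inl hσ⟩
    · obtain ⟨f, hf, hσ⟩ := h.comp_swap.exists_eq_comp_fst fun a b => hh b a
      exact ⟨f, hf, Or.inr fun p => hσ p.swap⟩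
  · rintro ⟨f, hf, hσ | hσ⟩
    · rw [funext hσ]
      exact (isAbsorbing_comp_fst_iff f).2 hf
    · rw [← isAbsorbing_comp_swap_iff, show σ ∘ Prod.swap = fun p => f p.1 from funext (hσ ·.swap)]
      exact (isAbsorbing_comp_fst_iff f).2 hf
end

section
/- Let σ, σ' : ℤ × ℤ → Bool be spin configurations. If for every pair of nearest neighbors x, y ∈ ℤ × ℤ one has σ x = σ y if and only if σ' x = σ' y, then either σ' = σ, or σ' x = ¬(σ x) for every x ∈ ℤ × ℤ. -/
/-!
The relative spin `x ↦ xor (σ x) (σ' x)` is unchanged across every edge, since both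
configurations agree or disagree across it together. As the nearest-neighbour graph of `ℤ²`
is connected, the relative spin is constant; its value decides between `σ' = σ` and the flip.
-/

/-- `x` and `y` are nearest neighbors in `ℤ × ℤ`. -/
def nbr (x y : ℤ × ℤ) : Prop := (x.1 - y.1).natAbs + (x.2 - y.2).natAbs = 1

lemma Int.apply_eq_apply_zero_of_forall_succ {α : Type*} {f : ℤ → α}
    (hf : ∀ n, f (n + 1) = f n) (n : ℤ) : f n = f 0 := by
  induction n using Int.induction_on with
  | zero => rfl
  | succ k ih => rw [hf, ih]
  | pred k ih => rw [← ih, ← hf, sub_add_cancel]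

lemma nbr_succ_fst (a b : ℤ) : nbr (a + 1, b) (a, b) := by simp [nbr]

lemma nbr_succ_snd (a b : ℤ) : nbr (a, b + 1) (a, b) := by simp [nbr]

lemma apply_eq_apply_origin_of_forall_nbr {α : Type*} {f : ℤ × ℤ → α}
    (hf : ∀ x y, nbr x y → f x = f y) (x : ℤ × ℤ) : f x = f (0, 0) := by
  obtain ⟨a, b⟩ := x
  calc f (a, b) = f (a, 0) :=
        Int.apply_eq_apply_zero_of_forall_succ (f := fun b => f (a, b))
          (fun b => hf _ _ (nbr_succ_snd a b)) b
    _ = f (0, 0) :=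
        Int.apply_eq_apply_zero_of_forall_succ (f := fun a => f (a, 0))
          (fun a => hf _ _ (nbr_succ_fst a 0)) a

lemma Bool.xor_eq_xor_of_eq_iff_eq {a b a' b' : Bool} (h : a = b ↔ a' = b') :
    xor a a' = xor b b' := by
  revert h; cases a <;> cases b <;> cases a' <;> cases b' <;> decide

/-- If two spin configurations have exactly the same set of unsatisfied (disagreement)
edges, then they are equal or related by a global spin flip. -/
theorem stmt1 (σ σ' : ℤ × ℤ → Bool)
    (h : ∀ x y : ℤ × ℤ, nbr x y → (σ x = σ y ↔ σ' x = σ' y)) :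
    σ' = σ ∨ ∀ x : ℤ × ℤ, σ' x = !(σ x) := by
  have hconst (x : ℤ × ℤ) : xor (σ x) (σ' x) = xor (σ (0, 0)) (σ' (0, 0)) :=
    apply_eq_apply_origin_of_forall_nbr (fun x y hxy => Bool.xor_eq_xor_of_eq_iff_eq (h x y hxy)) x
  have hσ' (x : ℤ × ℤ) : σ' x = xor (σ x) (xor (σ (0, 0)) (σ' (0, 0))) := by
    rw [← hconst x]; exact (Bool.bne_self_left _ _).symm
  cases hc : xor (σ (0, 0)) (σ' (0, 0))
  · exact .inl (funext fun x => by simpa [hc] using hσ' x)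
  · exact .inr fun x => by simpa [hc] using hσ' x
end

section
/- Let n ≥ 0 be a real number and let R₁, …, R_m be axis-parallel closed rectangles R_i = [a_i, b_i] × [c_i, d_i] with 0 ≤ a_i ≤ b_i ≤ n and 0 ≤ c_i ≤ d_i ≤ n, whose open interiors (a_i, b_i) × (c_i, d_i) are pairwise disjoint. Assume that each R_i either spans the square horizontally (a_i = 0 and b_i = n), or spans it vertically (c_i = 0 and d_i = n), or touches two adjacent sides of the square ((a_i = 0 ∨ b_i = n) and (c_i = 0 ∨ d_i = n)). Then Σ_{i=1}^{m} min (b_i − a_i) (d_i − c_i) ≤ 2n. -/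
open MeasureTheory

lemma sum_Ioo_le (n : ℝ) (hn : 0 ≤ n) {ι : Type*} (s : Finset ι) (c d : ι → ℝ)
    (h : ∀ i ∈ s, 0 ≤ c i ∧ c i ≤ d i ∧ d i ≤ n)
    (hdisj : ∀ i ∈ s, ∀ j ∈ s, i ≠ j →
      Disjoint (Set.Ioo (c i) (d i)) (Set.Ioo (c j) (d j))) :
    ∑ i ∈ s, (d i - c i) ≤ n := by
  have hsub : (⋃ i ∈ s, Set.Ioo (c i) (d i)) ⊆ Set.Icc 0 n := by
    intro x hx
    simp only [Set.mem_iUnion] at hx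
    obtain ⟨i, hi, hx⟩ := hx
    exact ⟨le_trans (h i hi).1 hx.1.le, le_trans hx.2.le (h i hi).2.2⟩
  have hmeas : volume (⋃ i ∈ s, Set.Ioo (c i) (d i))
      = ∑ i ∈ s, ENNReal.ofReal (d i - c i) := by
    rw [measure_biUnion_finset (fun i hi j hj hij => hdisj i hi j hj hij)
      (fun i _ => measurableSet_Ioo)]
    exact Finset.sum_congr rfl fun i _ => Real.volume_Ioo
  have hle : ∑ i ∈ s, ENNReal.ofReal (d i - c i) ≤ ENNReal.ofReal n := by
    rw [← hmeas]
    calc volume (⋃ i ∈ s, Set.Ioo (c i) (d i)) ≤ volume (Set.Icc (0:ℝ) n) :=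
          measure_mono hsub
      _ = ENNReal.ofReal n := by rw [Real.volume_Icc, sub_zero]
  rw [← ENNReal.ofReal_sum_of_nonneg (fun i hi => sub_nonneg.2 (h i hi).2.1)] at hle
  exact (ENNReal.ofReal_le_ofReal_iff hn).1 hle

lemma key (n : ℝ) (hn : 0 ≤ n) (m : ℕ) (a b c d : Fin m → ℝ)
    (hab : ∀ i, 0 ≤ a i ∧ a i ≤ b i ∧ b i ≤ n)
    (hcd : ∀ i, 0 ≤ c i ∧ c i ≤ d i ∧ d i ≤ n)
    (hdisj : ∀ i j, i ≠ j →
      Disjoint (Set.Ioo (a i) (b i) ×ˢ Set.Ioo (c i) (d i))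
               (Set.Ioo (a j) (b j) ×ˢ Set.Ioo (c j) (d j)))
    (hside : ∀ i, a i < b i → c i < d i → (a i = 0 ∨ b i = n)) :
    ∑ i, min (b i - a i) (d i - c i) ≤ 2 * n := by
  classical
  set f : Fin m → ℝ := fun i => min (b i - a i) (d i - c i) with hf
  set s : Finset (Fin m) := Finset.univ.filter (fun i => a i < b i ∧ c i < d i) with hs
  have hstep : ∑ i, f i ≤ ∑ i ∈ s, f i := by
    have hsplit := Finset.sum_filter_add_sum_filter_not Finset.univ
      (fun i => a i < b i ∧ c i < d i) f
    have hneg : ∑ i ∈ Finset.univ.filter (fun i => ¬(a i < b i ∧ c i < d i)), f i ≤ 0 := by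
      refine Finset.sum_nonpos fun i hi => ?_
      simp only [Finset.mem_filter, not_and_or, not_lt] at hi
      rcases hi.2 with h | h
      · exact le_trans (min_le_left _ _) (by linarith)
      · exact le_trans (min_le_right _ _) (by linarith)
    calc ∑ i, f i = _ + _ := hsplit.symm
      _ ≤ ∑ i ∈ s, f i := by rw [hs]; linarith
  set sL : Finset (Fin m) := s.filter (fun i => a i = 0) with hsL
  set sR : Finset (Fin m) := s.filter (fun i => ¬ a i = 0) with hsR
  have hmem : ∀ i ∈ s, a i < b i ∧ c i < d i := fun i hi => (Finset.mem_filter.1 hi).2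
  have hL : ∑ i ∈ sL, f i ≤ n := by
    calc ∑ i ∈ sL, f i ≤ ∑ i ∈ sL, (d i - c i) :=
          Finset.sum_le_sum fun i _ => min_le_right _ _
      _ ≤ n := by
        refine sum_Ioo_le n hn sL c d (fun i _ => hcd i) ?_
        intro i hi j hj hij
        have hi' := Finset.mem_filter.1 hi
        have hj' := Finset.mem_filter.1 hj
        have hbi : 0 < b i := hi'.2 ▸ (by have := (hmem i hi'.1).1; linarith [hi'.2])
        have hbj : 0 < b j := by have := (hmem j hj'.1).1; linarith [hj'.2]
        set x : ℝ := min (b i) (b j) / 2 with hx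
        refine Set.disjoint_left.2 fun y hy hy' => ?_
        exact Set.disjoint_left.1 (hdisj i j hij)
          (⟨⟨by rw [hi'.2]; positivity, by
            have : x < b i := by
              have := min_le_left (b i) (b j); have := lt_min hbi hbj; simp [hx]; linarith [min_le_left (b i) (b j), lt_min hbi hbj]
            exact this⟩, hy⟩ : (x, y) ∈ Set.Ioo (a i) (b i) ×ˢ Set.Ioo (c i) (d i))
          (⟨⟨by rw [hj'.2]; positivity, by
            have : x < b j := by simp [hx]; linarith [min_le_right (b i) (b j), lt_min hbi hbj]
            exact this⟩, hy'⟩ : (x, y) ∈ Set.Ioo (a j) (b j) ×ˢ Set.Ioo (c j) (d j))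
  have hR : ∑ i ∈ sR, f i ≤ n := by
    calc ∑ i ∈ sR, f i ≤ ∑ i ∈ sR, (d i - c i) :=
          Finset.sum_le_sum fun i _ => min_le_right _ _
      _ ≤ n := by
        refine sum_Ioo_le n hn sR c d (fun i _ => hcd i) ?_
        intro i hi j hj hij
        have hi' := Finset.mem_filter.1 hi
        have hj' := Finset.mem_filter.1 hj
        have hbi : b i = n := by
          rcases hside i (hmem i hi'.1).1 (hmem i hi'.1).2 with h | h
          · exact absurd h hi'.2
          · exact h
        have hbj : b j = n := by
          rcases hside j (hmem j hj'.1).1 (hmem j hj'.1).2 with h | h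
          · exact absurd h hj'.2
          · exact h
        have hai : a i < n := hbi ▸ (hmem i hi'.1).1
        have haj : a j < n := hbj ▸ (hmem j hj'.1).1
        set x : ℝ := (max (a i) (a j) + n) / 2 with hx
        refine Set.disjoint_left.2 fun y hy hy' => ?_
        exact Set.disjoint_left.1 (hdisj i j hij)
          (⟨⟨by simp [hx]; linarith [le_max_left (a i) (a j)], by
            rw [hbi]; simp [hx]; linarith [max_lt hai haj]⟩, hy⟩ :
            (x, y) ∈ Set.Ioo (a i) (b i) ×ˢ Set.Ioo (c i) (d i))
          (⟨⟨by simp [hx]; linarith [le_max_right (a i) (a j)], by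
            rw [hbj]; simp [hx]; linarith [max_lt hai haj]⟩, hy'⟩ :
            (x, y) ∈ Set.Ioo (a j) (b j) ×ˢ Set.Ioo (c j) (d j))
  have hsplit2 : ∑ i ∈ sL, f i + ∑ i ∈ sR, f i = ∑ i ∈ s, f i :=
    Finset.sum_filter_add_sum_filter_not s (fun i => a i = 0) f
  linarith

/-- For axis-parallel rectangles in the square `[0,n]²` with pairwise disjoint interiors,
each of which spans the square horizontally, or vertically, or touches two adjacent sides
of the square, the sum of the shorter side lengths is at most `2n`. -/
theorem stmt4 (n : ℝ) (hn : 0 ≤ n) (m : ℕ) (a b c d : Fin m → ℝ)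
    (hab : ∀ i, 0 ≤ a i ∧ a i ≤ b i ∧ b i ≤ n)
    (hcd : ∀ i, 0 ≤ c i ∧ c i ≤ d i ∧ d i ≤ n)
    (hdisj : ∀ i j, i ≠ j →
      Disjoint (Set.Ioo (a i) (b i) ×ˢ Set.Ioo (c i) (d i))
               (Set.Ioo (a j) (b j) ×ˢ Set.Ioo (c j) (d j)))
    (htype : ∀ i, (a i = 0 ∧ b i = n) ∨ (c i = 0 ∧ d i = n) ∨
      ((a i = 0 ∨ b i = n) ∧ (c i = 0 ∨ d i = n))) :
    ∑ i, min (b i - a i) (d i - c i) ≤ 2 * n := by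
  by_cases hcase : ∀ i, a i < b i → c i < d i → (a i = 0 ∨ b i = n)
  · exact key n hn m a b c d hab hcd hdisj hcase
  · push_neg at hcase
    obtain ⟨j, hjab, hjcd, hja, hjb⟩ := hcase
    -- j is a pure vertical rectangle
    have hjV : c j = 0 ∧ d j = n := by
      rcases htype j with ⟨h1, _⟩ | h | ⟨h1, _⟩
      · exact absurd h1 hja
      · exact h
      · rcases h1 with h1 | h1
        · exact absurd h1 hja
        · exact absurd h1 hjb
    have hdisj' : ∀ i k, i ≠ k →
        Disjoint (Set.Ioo (c i) (d i) ×ˢ Set.Ioo (a i) (b i))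
                 (Set.Ioo (c k) (d k) ×ˢ Set.Ioo (a k) (b k)) := by
      intro i k hik
      refine Set.disjoint_left.2 fun p hp hp' => ?_
      exact Set.disjoint_left.1 (hdisj i k hik)
        (⟨hp.2, hp.1⟩ : (p.2, p.1) ∈ Set.Ioo (a i) (b i) ×ˢ Set.Ioo (c i) (d i))
        (⟨hp'.2, hp'.1⟩ : (p.2, p.1) ∈ Set.Ioo (a k) (b k) ×ˢ Set.Ioo (c k) (d k))
    have hside' : ∀ i, c i < d i → a i < b i → (c i = 0 ∨ d i = n) := by
      intro i hicd hiab
      rcases htype i with ⟨h1, h2⟩ | h | ⟨_, h2⟩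
      · -- horizontal spanning: contradicts j
        exfalso
        have hij : i ≠ j := fun h => hja (h ▸ h1)
        have hp : ((a j + b j) / 2, (c i + d i) / 2)
            ∈ Set.Ioo (a i) (b i) ×ˢ Set.Ioo (c i) (d i) := by
          constructor
          · constructor
            · rw [h1]; linarith [(hab j).1, hjab]
            · rw [h2]; linarith [(hab j).2.2, hjab]
          · exact ⟨by linarith, by linarith⟩
        have hp' : ((a j + b j) / 2, (c i + d i) / 2)
            ∈ Set.Ioo (a j) (b j) ×ˢ Set.Ioo (c j) (d j) := by
          constructor
          · exact ⟨by linarith, by linarith⟩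
          · constructor
            · rw [hjV.1]; linarith [(hcd i).1, hicd]
            · rw [hjV.2]; linarith [(hcd i).2.2, hicd]
        exact Set.disjoint_left.1 (hdisj i j hij) hp hp'
      · exact Or.inl h.1
      · exact h2
    have := key n hn m c d a b hcd hab hdisj' hside'
    calc ∑ i, min (b i - a i) (d i - c i) = ∑ i, min (d i - c i) (b i - a i) :=
          Finset.sum_congr rfl fun i _ => min_comm _ _
      _ ≤ 2 * n := this
end

section
/- Let n ≥ 1 be an integer and let γ₁, …, γ_m be finite lattice paths in the grid {0, …, n} × {0, …, n}, where γ_i is a sequence of points p^i_0, …, p^i_{k_i} with k_i ≥ 1 such that either every increment p^i_{j+1} − p^i_j lies in {(1,0), (0,1)} or every increment lies in {(1,0), (0,−1)} (each path is monotonic), and both endpoints p^i_0 and p^i_{k_i} lie on the boundary of the grid (i.e., have some coordinate equal to 0 or to n). Let R_i ⊆ ℤ × ℤ be the spanning rectangle of γ_i, namely the product of the closed integer intervals between the first coordinates and between the second coordinates of its two endpoints, and assume R₁, …, R_m are pairwise disjoint subsets of ℤ × ℤ. Then the total number of corners, Σ_i #{j : 1 ≤ j ≤ k_i − 1 and p^i_{j+1}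 − p^i_j ≠ p^i_j − p^i_{j−1}}, is at most 4(n + 1). -/
/-!
A monotone path with `W` horizontal and `H` vertical steps turns at most `2 * min W H` times,
since every turn is adjacent to a step of each kind. Its spanning rectangle has width `W`,
height `H` and two opposite corners on the boundary of the grid, so the sides of the rectangle
through these corners lie on the boundary: the rectangle contains at least `2 * min W H`
boundary points of the grid. The rectangles being disjoint, the total number of corners is at
most the number of boundary points of the grid, which is at most `4 * (n + 1)`.
-/

/-- A point of `ℤ × ℤ` is on the boundary of the grid `{0,…,n} × {0,…,n}`. -/
def onBd (n : ℕ) (q : ℤ × ℤ) : Prop :=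
  q.1 = 0 ∨ q.1 = (n : ℤ) ∨ q.2 = 0 ∨ q.2 = (n : ℤ)

open Finset

instance (n : ℕ) : DecidablePred (onBd n) :=
  fun _ => inferInstanceAs (Decidable (_ ∨ _ ∨ _ ∨ _))

section Paths

variable {G : Type*} [AddCommGroup G] [DecidableEq G]

def corners (p : ℕ → G) (K : ℕ) : Finset ℕ :=
  (Icc 1 (K - 1)).filter fun j => p (j + 1) - p j ≠ p j - p (j - 1)

def stepIndices (p : ℕ → G) (K : ℕ) (v : G) : Finset ℕ :=
  (range K).filter fun t => p (t + 1) - p t = v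

theorem card_corners_le (p : ℕ → G) (K : ℕ) {u v : G}
    (hstep : ∀ t < K, p (t + 1) - p t = u ∨ p (t + 1) - p t = v) :
    (corners p K).card ≤ 2 * (stepIndices p K v).card := by
  have hsub : corners p K ⊆ stepIndices p K v ∪ (stepIndices p K v).image (· + 1) := by
    intro j hj
    simp only [corners, mem_filter, mem_Icc] at hj
    obtain ⟨⟨hj1, hjK⟩, hturn⟩ := hj
    rcases hstep j (by omega) with hu | hv
    · have hprev : p (j - 1 + 1) - p (j - 1) = v := by
        refine (hstep (j - 1) (by omega)).resolve_left fun hu' => hturn ?_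
        rw [hu, ← hu', Nat.sub_add_cancel hj1]
      refine mem_union_right _ (mem_image.2 ⟨j - 1, ?_, Nat.sub_add_cancel hj1⟩)
      exact mem_filter.2 ⟨mem_range.2 (by omega), hprev⟩
    · exact mem_union_left _ (mem_filter.2 ⟨mem_range.2 (by omega), hv⟩)
  calc (corners p K).card
      ≤ (stepIndices p K v).card + ((stepIndices p K v).image (· + 1)).card :=
        (card_le_card hsub).trans (card_union_le _ _)
    _ ≤ 2 * (stepIndices p K v).card := by
        have := card_image_le (s := stepIndices p K v) (f := (· + 1))
        omega

theorem sub_eq_card_stepIndices_smul_add (p : ℕ → G) (K : ℕ) {u v : G} (huv : u ≠ v)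
    (hstep : ∀ t < K, p (t + 1) - p t = u ∨ p (t + 1) - p t = v) :
    p K - p 0 = (stepIndices p K u).card • u + (stepIndices p K v).card • v := by
  have hnot : (range K).filter (fun t => ¬ p (t + 1) - p t = u) = stepIndices p K v :=
    filter_congr fun t ht => ⟨(hstep t (mem_range.1 ht)).resolve_left,
      fun hv hu => huv (hu.symm.trans hv)⟩
  calc p K - p 0 = ∑ t ∈ range K, (p (t + 1) - p t) := (sum_range_sub p K).symm
    _ = ∑ t ∈ range K, if p (t + 1) - p t = u then u else v :=
        sum_congr rfl fun t ht => by
          split_ifs with hu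
          exacts [hu, (hstep t (mem_range.1 ht)).resolve_left hu]
    _ = _ := by rw [sum_ite, sum_const, sum_const, hnot]; rfl

end Paths

theorem card_corners_le_two_mul_min (p : ℕ → ℤ × ℤ) (K : ℕ)
    (hmono : (∀ j < K, p (j + 1) - p j ∈ ({(1, 0), (0, 1)} : Set (ℤ × ℤ))) ∨
      (∀ j < K, p (j + 1) - p j ∈ ({(1, 0), (0, -1)} : Set (ℤ × ℤ)))) :
    (corners p K).card ≤ 2 * min ((p K).1 - (p 0).1).natAbs ((p K).2 - (p 0).2).natAbs := by
  obtain ⟨ε, hε, hstep⟩ : ∃ ε : ℤ, ε.natAbs = 1 ∧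
      ∀ t < K, p (t + 1) - p t = (1, 0) ∨ p (t + 1) - p t = (0, ε) := by
    rcases hmono with h | h
    exacts [⟨1, rfl, h⟩, ⟨-1, rfl, h⟩]
  have hdisp : p K - p 0 =
      (((stepIndices p K (1, 0)).card : ℤ), (stepIndices p K (0, ε)).card * ε) := by
    rw [sub_eq_card_stepIndices_smul_add p K (by simp) hstep]
    simp
  have hW : ((p K).1 - (p 0).1).natAbs = (stepIndices p K (1, 0)).card := by
    rw [← Prod.fst_sub, hdisp, Int.natAbs_natCast]
  have hH : ((p K).2 - (p 0).2).natAbs = (stepIndices p K (0, ε)).card := by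
    rw [← Prod.snd_sub, hdisp, Int.natAbs_mul, hε, Int.natAbs_natCast, mul_one]
  have hcornersH := card_corners_le p K hstep
  have hcornersW := card_corners_le p K fun t ht => (hstep t ht).symm
  omega

theorem exists_side_subset_filter_onBd {n : ℕ} {q : ℤ × ℤ} (hq : onBd n q) {X Y : Finset ℤ}
    (hqX : q.1 ∈ X) (hqY : q.2 ∈ Y) :
    ∃ L ⊆ (X ×ˢ Y).filter (onBd n), min X.card Y.card ≤ L.card ∧
      ∀ z ∈ L, z.1 = q.1 ∨ z.2 = q.2 := by
  rcases or_assoc.2 hq with hq1 | hq2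
  · refine ⟨{q.1} ×ˢ Y, fun z hz => ?_, by simp, fun z hz => Or.inl ?_⟩
    · rw [mem_product, mem_singleton] at hz
      refine mem_filter.2 ⟨mem_product.2 ⟨hz.1 ▸ hqX, hz.2⟩, ?_⟩
      unfold onBd
      rw [hz.1]
      tauto
    · exact (mem_singleton.1 (mem_product.1 hz).1)
  · refine ⟨X ×ˢ {q.2}, fun z hz => ?_, by simp, fun z hz => Or.inr ?_⟩
    · rw [mem_product, mem_singleton] at hz
      refine mem_filter.2 ⟨mem_product.2 ⟨hz.1, hz.2 ▸ hqY⟩, ?_⟩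
      unfold onBd
      rw [hz.2]
      tauto
    · exact (mem_singleton.1 (mem_product.1 hz).2)

theorem two_mul_min_le_card_filter_onBd {n : ℕ} {a b : ℤ × ℤ} (ha : onBd n a)
    (hb : onBd n b) :
    2 * min (b.1 - a.1).natAbs (b.2 - a.2).natAbs ≤
      ((uIcc a.1 b.1 ×ˢ uIcc a.2 b.2).filter (onBd n)).card := by
  rcases eq_or_ne a.1 b.1 with h1 | h1
  · simp [h1]
  rcases eq_or_ne a.2 b.2 with h2 | h2
  · simp [h2]
  obtain ⟨A, hAS, hAcard, hA⟩ := exists_side_subset_filter_onBd ha left_mem_uIcc left_mem_uIcc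
  obtain ⟨B, hBS, hBcard, hB⟩ := exists_side_subset_filter_onBd hb right_mem_uIcc right_mem_uIcc
  have hinter : A ∩ B ⊆ {(a.1, b.2), (b.1, a.2)} := by
    intro z hz
    rw [mem_inter] at hz
    rw [mem_insert, mem_singleton]
    rcases hA z hz.1 with hza | hza <;> rcases hB z hz.2 with hzb | hzb
    · exact absurd (hza.symm.trans hzb) h1
    · exact Or.inl (Prod.ext hza hzb)
    · exact Or.inr (Prod.ext hzb hza)
    · exact absurd (hza.symm.trans hzb) h2
  have hunion := card_union_add_card_inter A B
  have hcover := card_le_card (union_subset hAS hBS)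
  have hcorners := (card_le_card hinter).trans card_le_two
  rw [Int.card_uIcc, Int.card_uIcc] at hAcard hBcard
  omega

noncomputable def gridBoundary (n : ℕ) : Finset (ℤ × ℤ) :=
  (Icc 0 (n : ℤ) ×ˢ Icc 0 (n : ℤ)).filter (onBd n)

theorem card_gridBoundary_le (n : ℕ) : (gridBoundary n).card ≤ 4 * (n + 1) := by
  have hsub : gridBoundary n ⊆
      ({0, (n : ℤ)} ×ˢ Icc 0 (n : ℤ)) ∪ (Icc 0 (n : ℤ) ×ˢ {0, (n : ℤ)}) := by
    intro z hz
    simp only [gridBoundary, onBd, mem_filter, mem_product] at hz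
    simp only [mem_union, mem_product, mem_insert, mem_singleton]
    tauto
  have hIcc : (Icc 0 (n : ℤ)).card = n + 1 := by rw [Int.card_Icc]; omega
  calc (gridBoundary n).card
      ≤ ({0, (n : ℤ)} ×ˢ Icc 0 (n : ℤ)).card + (Icc 0 (n : ℤ) ×ˢ {0, (n : ℤ)}).card :=
        (card_le_card hsub).trans (card_union_le _ _)
    _ ≤ 2 * (n + 1) + (n + 1) * 2 := by
        rw [card_product, card_product, hIcc]
        gcongr <;> exact card_le_two
    _ = 4 * (n + 1) := by ring

theorem stmt5_general (n : ℕ) (m : ℕ) (k : Fin m → ℕ)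
    (p : Fin m → ℕ → ℤ × ℤ)
    (hgrid : ∀ i, ∀ j ≤ k i,
      (p i j).1 ∈ Set.Icc (0 : ℤ) (n : ℤ) ∧ (p i j).2 ∈ Set.Icc (0 : ℤ) (n : ℤ))
    (hmono : ∀ i,
      (∀ j < k i, p i (j + 1) - p i j ∈ ({(1, 0), (0, 1)} : Set (ℤ × ℤ))) ∨
      (∀ j < k i, p i (j + 1) - p i j ∈ ({(1, 0), (0, -1)} : Set (ℤ × ℤ))))
    (hbd : ∀ i, onBd n (p i 0) ∧ onBd n (p i (k i)))
    (R : Fin m → Set (ℤ × ℤ))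
    (hR : ∀ i, R i = Set.uIcc (p i 0).1 (p i (k i)).1 ×ˢ Set.uIcc (p i 0).2 (p i (k i)).2)
    (hdisj : ∀ i j, i ≠ j → Disjoint (R i) (R j)) :
    ∑ i, ((Finset.Icc 1 (k i - 1)).filter
        (fun j => p i (j + 1) - p i j ≠ p i j - p i (j - 1))).card ≤ 4 * (n + 1) := by
  let S : Fin m → Finset (ℤ × ℤ) := fun i =>
    (uIcc (p i 0).1 (p i (k i)).1 ×ˢ uIcc (p i 0).2 (p i (k i)).2).filter (onBd n)
  have hSR : ∀ i, (S i : Set (ℤ × ℤ)) ⊆ R i := fun i => by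
    rw [hR i, ← coe_uIcc, ← coe_uIcc, ← coe_product]
    exact filter_subset _ _
  have hSdisj : ((univ : Finset (Fin m)) : Set (Fin m)).PairwiseDisjoint S :=
    fun i _ j _ hij => disjoint_coe.1 ((hdisj i j hij).mono (hSR i) (hSR j))
  have hSgrid : ∀ i, S i ⊆ gridBoundary n := fun i =>
    filter_subset_filter _ <| product_subset_product
      (uIcc_subset_Icc (mem_Icc.2 (hgrid i 0 (Nat.zero_le _)).1) (mem_Icc.2 (hgrid i _ le_rfl).1))
      (uIcc_subset_Icc (mem_Icc.2 (hgrid i 0 (Nat.zero_le _)).2) (mem_Icc.2 (hgrid i _ le_rfl).2))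
  calc ∑ i, (corners (p i) (k i)).card
      ≤ ∑ i, (S i).card := sum_le_sum fun i _ =>
        (card_corners_le_two_mul_min (p i) (k i) (hmono i)).trans
          (two_mul_min_le_card_filter_onBd (hbd i).1 (hbd i).2)
    _ = (univ.biUnion S).card := (card_biUnion hSdisj).symm
    _ ≤ (gridBoundary n).card := card_le_card (biUnion_subset.2 fun i _ => hSgrid i)
    _ ≤ 4 * (n + 1) := card_gridBoundary_le n

/-- For monotonic lattice paths in the grid `{0,…,n} × {0,…,n}` with endpoints on the
boundary of the grid and pairwise disjoint spanning rectangles, the total number of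
corners is at most `4(n+1)`. -/
theorem stmt5 (n : ℕ) (hn : 1 ≤ n) (m : ℕ) (k : Fin m → ℕ) (hk : ∀ i, 1 ≤ k i)
    (p : Fin m → ℕ → ℤ × ℤ)
    (hgrid : ∀ i, ∀ j ≤ k i,
      (p i j).1 ∈ Set.Icc (0 : ℤ) (n : ℤ) ∧ (p i j).2 ∈ Set.Icc (0 : ℤ) (n : ℤ))
    (hmono : ∀ i,
      (∀ j < k i, p i (j + 1) - p i j ∈ ({(1, 0), (0, 1)} : Set (ℤ × ℤ))) ∨
      (∀ j < k i, p i (j + 1) - p i j ∈ ({(1, 0), (0, -1)} : Set (ℤ × ℤ))))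
    (hbd : ∀ i, onBd n (p i 0) ∧ onBd n (p i (k i)))
    (R : Fin m → Set (ℤ × ℤ))
    (hR : ∀ i, R i = Set.uIcc (p i 0).1 (p i (k i)).1 ×ˢ Set.uIcc (p i 0).2 (p i (k i)).2)
    (hdisj : ∀ i j, i ≠ j → Disjoint (R i) (R j)) :
    ∑ i, ((Finset.Icc 1 (k i - 1)).filter
        (fun j => p i (j + 1) - p i j ≠ p i j - p i (j - 1))).card ≤ 4 * (n + 1) :=
  stmt5_general n m k p hgrid hmono hbd R hR hdisj
end

section
/- Let L ≥ 1 be an integer, Q_L = {−L, …, L} × {−L, …, L} ⊆ ℤ × ℤ, and let σ : ℤ × ℤ → Bool be a spin configuration. Call a pair of nearest neighbors {x, y} a disagreement edge if σ x ≠ σ y. Suppose: (i) for every x = (i, j) with −L ≤ i ≤ L − 1 and −L ≤ j ≤ L − 1, it is not the case that the unit plaquette with corners x, x+(1,0), x+(0,1), x+(1,1) contains both a horizontal disagreement edge (one of {x, x+(1,0)} or {x+(0,1), x+(1,1)}) and a vertical disagreement edge (one of {x, x+(0,1)} or {x+(1,0), x+(1,1)}); and (ii) there is no x with x−(1,0),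 x, x+(1,0) all in Q_L and σ(x−(1,0)) ≠ σ x ≠ σ(x+(1,0)), and no x with x−(0,1), x, x+(0,1) all in Q_L and σ(x−(0,1)) ≠ σ x ≠ σ(x+(0,1)). Then there exists a spin configuration σ' : ℤ × ℤ → Bool in which every site agrees with at least three of its four nearest neighbors, such that σ' = σ on Q_L. -/
/-- Membership in the square `Q_L = {-L,…,L}²`. -/
def inQ (L : ℕ) (x : ℤ × ℤ) : Prop :=
  x.1 ∈ Set.Icc (-(L : ℤ)) L ∧ x.2 ∈ Set.Icc (-(L : ℤ)) L

lemma eq_chain (f : ℤ → Bool) (a b : ℤ)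
    (h : ∀ j, a ≤ j → j + 1 ≤ b → f j = f (j + 1)) :
    ∀ j1 j2, a ≤ j1 → j1 ≤ b → a ≤ j2 → j2 ≤ b → f j1 = f j2 := by
  have key : ∀ j, a ≤ j → j ≤ b → f j = f a := by
    refine Int.le_induction ?_ ?_
    · intro _; rfl
    · intro n hn ih hb
      exact (h n hn hb).symm.trans (ih (by linarith))
  intro j1 j2 h1 h1' h2 h2'
  exact (key j1 h1 h1').trans (key j2 h2 h2').symm

lemma iff_chain (P : ℤ → Prop) (a b : ℤ)
    (h : ∀ j, a ≤ j → j + 1 ≤ b → (P j ↔ P (j + 1))) :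
    ∀ j1 j2, a ≤ j1 → j1 ≤ b → a ≤ j2 → j2 ≤ b → (P j1 ↔ P j2) := by
  have key : ∀ j, a ≤ j → j ≤ b → (P j ↔ P a) := by
    refine Int.le_induction ?_ ?_
    · intro _; exact Iff.rfl
    · intro n hn ih hb
      exact (h n hn hb).symm.trans (ih (by linarith))
  intro j1 j2 h1 h1' h2 h2'
  exact (key j1 h1 h1').trans (key j2 h2 h2').symm

lemma filter_card_aux (p : ℤ × ℤ → Prop) [DecidablePred p] (a b c : ℤ × ℤ)
    (hab : a ≠ b) (hac : a ≠ c) (hbc : b ≠ c)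
    (ha : a ∈ nbrOffsets) (hb : b ∈ nbrOffsets) (hc : c ∈ nbrOffsets)
    (pa : p a) (pb : p b) (pc : p c) :
    3 ≤ (nbrOffsets.filter p).card := by
  have hsub : ({a, b, c} : Finset (ℤ × ℤ)) ⊆ nbrOffsets.filter p := by
    intro d hd
    simp only [Finset.mem_insert, Finset.mem_singleton] at hd
    rcases hd with rfl | rfl | rfl <;> simp [Finset.mem_filter, *]
  have hcard : ({a, b, c} : Finset (ℤ × ℤ)).card = 3 := by
    rw [Finset.card_insert_of_notMem (by simp [hab, hac]),
      Finset.card_insert_of_notMem (by simp [hbc]), Finset.card_singleton]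
  exact hcard ▸ Finset.card_le_card hsub

/-- If a spin configuration has no domain-wall corner inside `Q_L` (no plaquette of `Q_L`
carrying both a horizontal and a vertical disagreement edge) and no two parallel flat
domain walls at distance one inside `Q_L`, then it agrees on `Q_L` with an absorbing
state, i.e. with some configuration in which every site agrees with at least three of its
four nearest neighbors. -/
theorem stmt10 (L : ℕ) (hL : 1 ≤ L) (σ : ℤ × ℤ → Bool)
    (hi : ∀ i j : ℤ, -(L : ℤ) ≤ i → i ≤ (L : ℤ) - 1 → -(L : ℤ) ≤ j → j ≤ (L : ℤ) - 1 →
      ¬ ((σ (i, j) ≠ σ (i + 1, j) ∨ σ (i, j + 1) ≠ σ (i + 1, j + 1)) ∧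
         (σ (i, j) ≠ σ (i, j + 1) ∨ σ (i + 1, j) ≠ σ (i + 1, j + 1))))
    (hii_h : ¬ ∃ x : ℤ × ℤ, inQ L (x - (1, 0)) ∧ inQ L x ∧ inQ L (x + (1, 0)) ∧
      σ (x - (1, 0)) ≠ σ x ∧ σ x ≠ σ (x + (1, 0)))
    (hii_v : ¬ ∃ x : ℤ × ℤ, inQ L (x - (0, 1)) ∧ inQ L x ∧ inQ L (x + (0, 1)) ∧
      σ (x - (0, 1)) ≠ σ x ∧ σ x ≠ σ (x + (0, 1))) :
    ∃ σ' : ℤ × ℤ → Bool,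
      (∀ x : ℤ × ℤ, 3 ≤ (nbrOffsets.filter (fun d => σ' (x + d) = σ' x)).card) ∧
      ∀ x : ℤ × ℤ, inQ L x → σ' x = σ x := by
  have hLz : (1 : ℤ) ≤ (L : ℤ) := by exact_mod_cast hL
  have hstepH : ∀ i j : ℤ, -(L : ℤ) ≤ i → i ≤ (L : ℤ) - 1 → -(L : ℤ) ≤ j → j ≤ (L : ℤ) - 1 →
      ((σ (i, j) ≠ σ (i + 1, j)) ↔ (σ (i, j + 1) ≠ σ (i + 1, j + 1))) := by
    intro i j h1 h2 h3 h4
    by_cases hc : σ (i, j) ≠ σ (i + 1, j) ∨ σ (i, j + 1) ≠ σ (i + 1, j + 1)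
    · have hB : ¬ (σ (i, j) ≠ σ (i, j + 1) ∨ σ (i + 1, j) ≠ σ (i + 1, j + 1)) :=
        fun hb => hi i j h1 h2 h3 h4 ⟨hc, hb⟩
      push_neg at hB
      rw [hB.1, hB.2]
    · push_neg at hc
      constructor
      · intro h; exact absurd h (by simp [hc.1])
      · intro h; exact absurd h (by simp [hc.2])
  have hstepV : ∀ i j : ℤ, -(L : ℤ) ≤ i → i ≤ (L : ℤ) - 1 → -(L : ℤ) ≤ j → j ≤ (L : ℤ) - 1 →
      ((σ (i, j) ≠ σ (i, j + 1)) ↔ (σ (i + 1, j) ≠ σ (i + 1, j + 1))) := by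
    intro i j h1 h2 h3 h4
    by_cases hc : σ (i, j) ≠ σ (i, j + 1) ∨ σ (i + 1, j) ≠ σ (i + 1, j + 1)
    · have hB : ¬ (σ (i, j) ≠ σ (i + 1, j) ∨ σ (i, j + 1) ≠ σ (i + 1, j + 1)) :=
        fun hb => hi i j h1 h2 h3 h4 ⟨hb, hc⟩
      push_neg at hB
      rw [hB.1, hB.2]
    · push_neg at hc
      constructor
      · intro h; exact absurd h (by simp [hc.1])
      · intro h; exact absurd h (by simp [hc.2])
  have hHconst : ∀ i : ℤ, -(L : ℤ) ≤ i → i ≤ (L : ℤ) - 1 →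
      ∀ j1 j2 : ℤ, -(L : ℤ) ≤ j1 → j1 ≤ L → -(L : ℤ) ≤ j2 → j2 ≤ L →
        ((σ (i, j1) ≠ σ (i + 1, j1)) ↔ (σ (i, j2) ≠ σ (i + 1, j2))) := by
    intro i h1 h2
    exact iff_chain (fun j => σ (i, j) ≠ σ (i + 1, j)) (-(L : ℤ)) L
      (fun j hj hj' => hstepH i j h1 h2 hj (by linarith))
  have hVconst : ∀ j : ℤ, -(L : ℤ) ≤ j → j ≤ (L : ℤ) - 1 →
      ∀ i1 i2 : ℤ, -(L : ℤ) ≤ i1 → i1 ≤ L → -(L : ℤ) ≤ i2 → i2 ≤ L →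
        ((σ (i1, j) ≠ σ (i1, j + 1)) ↔ (σ (i2, j) ≠ σ (i2, j + 1))) := by
    intro j h1 h2
    exact iff_chain (fun i => σ (i, j) ≠ σ (i, j + 1)) (-(L : ℤ)) L
      (fun i hi1 hi2 => hstepV i j hi1 (by linarith) h1 h2)
  set c : ℤ → ℤ := fun j => max (-(L : ℤ)) (min j L) with hc
  have hcid : ∀ j : ℤ, -(L : ℤ) ≤ j → j ≤ L → c j = j := by
    intro j h1 h2
    simp only [hc]
    rw [min_eq_left h2, max_eq_right h1]
  have hctop : ∀ j : ℤ, (L : ℤ) ≤ j → c (j + 1) = c j := by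
    intro j h
    simp only [hc]
    rw [min_eq_right h, min_eq_right (by linarith)]
  have hcbot : ∀ j : ℤ, j ≤ -(L : ℤ) → c (j - 1) = c j := by
    intro j h
    simp only [hc]
    rw [max_eq_left (by rw [min_le_iff]; left; linarith),
      max_eq_left (by rw [min_le_iff]; left; linarith)]
  by_cases hV : ∃ i j : ℤ, (-(L : ℤ) ≤ i ∧ i ≤ L) ∧ (-(L : ℤ) ≤ j ∧ j ≤ (L : ℤ) - 1) ∧
      σ (i, j) ≠ σ (i, j + 1)
  · -- there is a vertical disagreement edge: no horizontal one, rows are constant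
    obtain ⟨i', j', ⟨hi1, hi2⟩, ⟨hj1, hj2⟩, hVe⟩ := hV
    have hnoH : ∀ i j : ℤ, -(L : ℤ) ≤ i → i ≤ (L : ℤ) - 1 → -(L : ℤ) ≤ j → j ≤ L →
        σ (i, j) = σ (i + 1, j) := by
      intro i j h1 h2 h3 h4
      by_contra hne
      have hH' : σ (i, j') ≠ σ (i + 1, j') :=
        (hHconst i h1 h2 j j' h3 h4 hj1 (by linarith)).mp hne
      have hV' : σ (i, j') ≠ σ (i, j' + 1) :=
        (hVconst j' hj1 hj2 i' i hi1 hi2 h1 (by linarith)).mp hVe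
      exact hi i j' h1 h2 hj1 hj2 ⟨Or.inl hH', Or.inl hV'⟩
    have hrow : ∀ i j : ℤ, -(L : ℤ) ≤ i → i ≤ L → -(L : ℤ) ≤ j → j ≤ L →
        σ (i, j) = σ (0, j) := by
      intro i j h1 h2 h3 h4
      exact eq_chain (fun i => σ (i, j)) (-(L : ℤ)) L
        (fun k hk hk' => hnoH k j hk (by linarith) h3 h4) i 0 h1 h2 (by linarith) (by linarith)
    set ρ : ℤ → Bool := fun j => σ (0, c j) with hρ
    have hkey : ∀ j : ℤ, ρ (j + 1) = ρ j ∨ ρ (j - 1) = ρ j := by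
      intro j
      rcases le_or_gt (L : ℤ) j with h | h
      · left
        simp only [hρ, hctop j h]
      rcases le_or_gt j (-(L : ℤ)) with h' | h'
      · right
        simp only [hρ, hcbot j h']
      · by_contra hcon
        push_neg at hcon
        obtain ⟨h1, h2⟩ := hcon
        simp only [hρ] at h1 h2
        rw [hcid (j + 1) (by linarith) (by linarith), hcid j (by linarith) (by linarith)] at h1
        rw [hcid (j - 1) (by linarith) (by linarith), hcid j (by linarith) (by linarith)] at h2
        refine hii_v ⟨(0, j), ?_, ?_, ?_, ?_, ?_⟩
        · simp only [inQ, Prod.mk_sub_mk, Set.mem_Icc]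
          refine ⟨⟨by linarith, by linarith⟩, by linarith, by linarith⟩
        · simp only [inQ, Set.mem_Icc]
          refine ⟨⟨by linarith, by linarith⟩, by linarith, by linarith⟩
        · simp only [inQ, Prod.mk_add_mk, Set.mem_Icc]
          refine ⟨⟨by linarith, by linarith⟩, by linarith, by linarith⟩
        · exact fun hh => h2 hh
        · exact fun hh => h1 hh.symm
    refine ⟨fun y => ρ y.2, ?_, ?_⟩
    · intro x
      rcases hkey x.2 with h | h
      · refine filter_card_aux _ (1, 0) (-1, 0) (0, 1) (by decide) (by decide) (by decide)
          (by decide) (by decide) (by decide) ?_ ?_ ?_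
        · show ρ (x.2 + 0) = ρ x.2; rw [add_zero]
        · show ρ (x.2 + 0) = ρ x.2; rw [add_zero]
        · exact h
      · refine filter_card_aux _ (1, 0) (-1, 0) (0, -1) (by decide) (by decide) (by decide)
          (by decide) (by decide) (by decide) ?_ ?_ ?_
        · show ρ (x.2 + 0) = ρ x.2; rw [add_zero]
        · show ρ (x.2 + 0) = ρ x.2; rw [add_zero]
        · show ρ (x.2 + (-1)) = ρ x.2
          rw [← sub_eq_add_neg]; exact h
    · intro x hx
      obtain ⟨⟨h1, h2⟩, h3, h4⟩ := hx
      show σ (0, c x.2) = σ x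
      rw [hcid x.2 h3 h4]
      exact (hrow x.1 x.2 h1 h2 h3 h4).symm
  · -- no vertical disagreement edge: columns are constant
    push_neg at hV
    have hcol : ∀ i j : ℤ, -(L : ℤ) ≤ i → i ≤ L → -(L : ℤ) ≤ j → j ≤ L →
        σ (i, j) = σ (i, 0) := by
      intro i j h1 h2 h3 h4
      exact eq_chain (fun j => σ (i, j)) (-(L : ℤ)) L
        (fun k hk hk' => hV i k ⟨h1, h2⟩ ⟨hk, by linarith⟩) j 0 h3 h4 (by linarith) (by linarith)
    set τ : ℤ → Bool := fun i => σ (c i, 0) with hτ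
    have hkey : ∀ i : ℤ, τ (i + 1) = τ i ∨ τ (i - 1) = τ i := by
      intro i
      rcases le_or_gt (L : ℤ) i with h | h
      · left
        simp only [hτ, hctop i h]
      rcases le_or_gt i (-(L : ℤ)) with h' | h'
      · right
        simp only [hτ, hcbot i h']
      · by_contra hcon
        push_neg at hcon
        obtain ⟨h1, h2⟩ := hcon
        simp only [hτ] at h1 h2
        rw [hcid (i + 1) (by linarith) (by linarith), hcid i (by linarith) (by linarith)] at h1
        rw [hcid (i - 1) (by linarith) (by linarith), hcid i (by linarith) (by linarith)] at h2
        refine hii_h ⟨(i, 0), ?_, ?_, ?_, ?_, ?_⟩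
        · simp only [inQ, Prod.mk_sub_mk, Set.mem_Icc]
          refine ⟨⟨by linarith, by linarith⟩, by linarith, by linarith⟩
        · simp only [inQ, Set.mem_Icc]
          refine ⟨⟨by linarith, by linarith⟩, by linarith, by linarith⟩
        · simp only [inQ, Prod.mk_add_mk, Set.mem_Icc]
          refine ⟨⟨by linarith, by linarith⟩, by linarith, by linarith⟩
        · exact fun hh => h2 hh
        · exact fun hh => h1 hh.symm
    refine ⟨fun y => τ y.1, ?_, ?_⟩
    · intro x
      rcases hkey x.1 with h | h
      · refine filter_card_aux _ (0, 1) (0, -1) (1, 0) (by decide) (by decide) (by decide)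
          (by decide) (by decide) (by decide) ?_ ?_ ?_
        · show τ (x.1 + 0) = τ x.1; rw [add_zero]
        · show τ (x.1 + 0) = τ x.1; rw [add_zero]
        · exact h
      · refine filter_card_aux _ (0, 1) (0, -1) (-1, 0) (by decide) (by decide) (by decide)
          (by decide) (by decide) (by decide) ?_ ?_ ?_
        · show τ (x.1 + 0) = τ x.1; rw [add_zero]
        · show τ (x.1 + 0) = τ x.1; rw [add_zero]
        · show τ (x.1 + (-1)) = τ x.1
          rw [← sub_eq_add_neg]; exact h
    · intro x hx
      obtain ⟨⟨h1, h2⟩, h3, h4⟩ := hx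
      show σ (c x.1, 0) = σ x
      rw [hcid x.1 h1 h2]
      exact (hcol x.1 x.2 h1 h2 h3 h4).symm
end
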